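/- arXiv:1110.3939 — 5 statements merged into one kernel-verified Lean document; each statement's English description precedes it below -/
import Mathlib

section
/- Let R be a preference profile over a finite candidate set C. Then: (1) the singleton {i} is a clone set for R for every i ∈ C; (2) the empty set is not a clone set for R, and C itself is a clone set for R; (3) if C_1 and C_2 are clone sets for R and C_1 ∩ C_2 ≠ ∅, then C_1 ∪ C_2 and C_1 ∩ C_2 are clone sets for R; (4) if C_1 and C_2 are clone sets for R and C_1 ⋈ C_2, then C_1 \ C_2 and C_2 \ C_1 are clone sets for R. -/
variable {α : Type*}

/-- `r` is a strict linear order (complete, transitive, antisymmetric) on the set `C`. -/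
def IsLinOn (C : Set α) (r : α → α → Prop) : Prop :=
  (∀ a ∈ C, ¬r a a) ∧
    (∀ a ∈ C, ∀ b ∈ C, ∀ c ∈ C, r a b → r b c → r a c) ∧
      ∀ a ∈ C, ∀ b ∈ C, a ≠ b → r a b ∨ r b a

/-- A preference profile over `C`: a (nonempty) finite tuple of linear orders on `C`. -/
def IsProfile (C : Set α) {n : ℕ} (R : Fin n → α → α → Prop) : Prop :=
  0 < n ∧ ∀ i, IsLinOn C (R i)

/-- `X` is a clone set for the profile `R` over `C`. -/
def IsCloneSet (C : Set α) {n : ℕ} (R : Fin n → α → α → Prop) (X : Set α) : Prop :=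
  X.Nonempty ∧ X ⊆ C ∧
    ∀ c ∈ X, ∀ c' ∈ X, ∀ a ∈ C \ X, ∀ i, (R i c a ↔ R i c' a)

/-- The clone structure of `R`: the family of all clone sets. -/
def cloneSets (C : Set α) {n : ℕ} (R : Fin n → α → α → Prop) : Set (Set α) :=
  {X | IsCloneSet C R X}

/-- `X` and `Y` intersect non-trivially. -/
def Bowtie (X Y : Set α) : Prop :=
  (X ∩ Y).Nonempty ∧ (X \ Y).Nonempty ∧ (Y \ X).Nonempty

theorem IsLinOn.rel_iff_not_rel {C : Set α} {r : α → α → Prop} (h : IsLinOn C r) {a b : α}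
    (ha : a ∈ C) (hb : b ∈ C) (hab : a ≠ b) : r a b ↔ ¬r b a :=
  ⟨fun hab' hba => h.1 a ha (h.2.1 a ha b hb a ha hab' hba),
    fun hba => (h.2.2 a ha b hb hab).resolve_right hba⟩

section CloneSet

variable {C : Set α} {n : ℕ} {R : Fin n → α → α → Prop}

theorem isCloneSet_singleton {c : α} (hc : c ∈ C) : IsCloneSet C R {c} := by
  refine ⟨Set.singleton_nonempty c, Set.singleton_subset_iff.mpr hc, ?_⟩
  rintro _ rfl _ rfl a - i
  rfl

theorem not_isCloneSet_empty : ¬IsCloneSet C R ∅ :=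
  fun h => Set.not_nonempty_empty h.1

theorem isCloneSet_self (hC : C.Nonempty) : IsCloneSet C R C :=
  ⟨hC, subset_rfl, fun _ _ _ _ _ ha _ => absurd ha.1 ha.2⟩

namespace IsCloneSet

variable {X Y : Set α}

theorem union (hX : IsCloneSet C R X) (hY : IsCloneSet C R Y) (hXY : (X ∩ Y).Nonempty) :
    IsCloneSet C R (X ∪ Y) := by
  obtain ⟨x, hxX, hxY⟩ := hXY
  refine ⟨⟨x, Or.inl hxX⟩, Set.union_subset hX.2.1 hY.2.1, fun c hc c' hc' a ha i => ?_⟩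
  have ha' : a ∈ C \ X ∧ a ∈ C \ Y :=
    ⟨⟨ha.1, fun h => ha.2 (Or.inl h)⟩, ⟨ha.1, fun h => ha.2 (Or.inr h)⟩⟩
  have like_x : ∀ d ∈ X ∪ Y, (R i d a ↔ R i x a) := by
    rintro d (hd | hd)
    · exact hX.2.2 d hd x hxX a ha'.1 i
    · exact hY.2.2 d hd x hxY a ha'.2 i
  exact (like_x c hc).trans (like_x c' hc').symm

theorem inter (hX : IsCloneSet C R X) (hY : IsCloneSet C R Y) (hXY : (X ∩ Y).Nonempty) :
    IsCloneSet C R (X ∩ Y) := by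
  refine ⟨hXY, Set.inter_subset_left.trans hX.2.1, fun c hc c' hc' a ha i => ?_⟩
  by_cases haX : a ∈ X
  · exact hY.2.2 c hc.2 c' hc'.2 a ⟨ha.1, fun haY => ha.2 ⟨haX, haY⟩⟩ i
  · exact hX.2.2 c hc.1 c' hc'.1 a ⟨ha.1, haX⟩ i

/-- The only new case is a candidate `a ∈ X ∩ Y`: picking `y ∈ Y \ X`, every `c ∈ X \ Y` ranks
`a` as it ranks `y` (since `Y` is a clone set and the orders are linear), and all of `X` ranks
`y` alike. -/
theorem diff (hR : ∀ i, IsLinOn C (R i)) (hX : IsCloneSet C R X) (hY : IsCloneSet C R Y)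
    (hXY : (X \ Y).Nonempty) (hYX : (Y \ X).Nonempty) : IsCloneSet C R (X \ Y) := by
  obtain ⟨y, hyY, hyX⟩ := hYX
  have hyC : y ∈ C := hY.2.1 hyY
  refine ⟨hXY, Set.sdiff_subset.trans hX.2.1, fun c hc c' hc' a ha i => ?_⟩
  by_cases haX : a ∈ X
  · have haY : a ∈ Y := by_contra fun haY => ha.2 ⟨haX, haY⟩
    have a_like_y : ∀ d ∈ X \ Y, (R i d a ↔ R i d y) := by
      intro d hd
      have hdC : d ∈ C := hX.2.1 hd.1
      rw [(hR i).rel_iff_not_rel hdC ha.1 (ne_of_mem_of_not_mem haY hd.2).symm,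
        (hR i).rel_iff_not_rel hdC hyC (ne_of_mem_of_not_mem hyY hd.2).symm]
      exact not_congr (hY.2.2 a haY y hyY d ⟨hdC, hd.2⟩ i)
    calc R i c a ↔ R i c y := a_like_y c hc
      _ ↔ R i c' y := hX.2.2 c hc.1 c' hc'.1 y ⟨hyC, hyX⟩ i
      _ ↔ R i c' a := (a_like_y c' hc').symm
  · exact hX.2.2 c hc.1 c' hc'.1 a ⟨ha.1, haX⟩ i

end IsCloneSet

end CloneSet

theorem cloneSets_basic_properties_general (C : Set α) (hne : C.Nonempty)
    {n : ℕ} (R : Fin n → α → α → Prop) (hR : IsProfile C R) :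
    (∀ i ∈ C, ({i} : Set α) ∈ cloneSets C R) ∧
      ((∅ : Set α) ∉ cloneSets C R ∧ C ∈ cloneSets C R) ∧
      (∀ C₁ ∈ cloneSets C R, ∀ C₂ ∈ cloneSets C R, (C₁ ∩ C₂).Nonempty →
        C₁ ∪ C₂ ∈ cloneSets C R ∧ C₁ ∩ C₂ ∈ cloneSets C R) ∧
      ∀ C₁ ∈ cloneSets C R, ∀ C₂ ∈ cloneSets C R, Bowtie C₁ C₂ →
        C₁ \ C₂ ∈ cloneSets C R ∧ C₂ \ C₁ ∈ cloneSets C R :=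
  ⟨fun _ hi => isCloneSet_singleton hi,
    ⟨not_isCloneSet_empty, isCloneSet_self hne⟩,
    fun _ h₁ _ h₂ hint => ⟨h₁.union h₂ hint, h₁.inter h₂ hint⟩,
    fun _ h₁ _ h₂ ⟨_, h₁₂, h₂₁⟩ => ⟨h₁.diff hR.2 h₂ h₁₂ h₂₁, h₂.diff hR.2 h₁ h₂₁ h₁₂⟩⟩

theorem cloneSets_basic_properties (C : Set α) (hfin : C.Finite) (hne : C.Nonempty)
    {n : ℕ} (R : Fin n → α → α → Prop) (hR : IsProfile C R) :
    (∀ i ∈ C, ({i} : Set α) ∈ cloneSets C R) ∧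
      ((∅ : Set α) ∉ cloneSets C R ∧ C ∈ cloneSets C R) ∧
      (∀ C₁ ∈ cloneSets C R, ∀ C₂ ∈ cloneSets C R, (C₁ ∩ C₂).Nonempty →
        C₁ ∪ C₂ ∈ cloneSets C R ∧ C₁ ∩ C₂ ∈ cloneSets C R) ∧
      ∀ C₁ ∈ cloneSets C R, ∀ C₂ ∈ cloneSets C R, Bowtie C₁ C₂ →
        C₁ \ C₂ ∈ cloneSets C R ∧ C₂ \ C₁ ∈ cloneSets C R :=
  cloneSets_basic_properties_general C hne R hR
end

section
/- For any preference profile R over a finite candidate set C, each clone set X for R has at most two proper minimal supersets in the clone structure 𝒞(R). -/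
variable {α : Type*}

/-- `Z` is a proper minimal superset of `X` in the family `𝓕`. -/
def IsProperMinimalSuperset (𝓕 : Set (Set α)) (X Z : Set α) : Prop :=
  Z ∈ 𝓕 ∧ X ⊆ Z ∧ X ≠ Z ∧ ∀ Y ∈ 𝓕, X ⊆ Y → Y ⊆ Z → Y = X ∨ Y = Z

/-!
In every vote, a clone set `X` is an interval of the ranking, and so is each proper minimal
superset `Z` of it. Two distinct such supersets meet exactly in `X`, since their intersection is
again a clone set. Two intervals meeting exactly in `X` cannot both extend beyond `X` on the same
side (the nearer protruding candidate would lie in both), so distinct minimal supersets protrude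
on opposite sides of `X`; with only two sides there is no room for a third.
-/

theorem Set.encard_le_two_of_no_three_distinct {s : Set α}
    (h : ∀ a ∈ s, ∀ b ∈ s, ∀ c ∈ s, a ≠ b → a ≠ c → b ≠ c → False) : s.encard ≤ 2 := by
  by_contra! hlt
  obtain ⟨t, hts, ht⟩ := Set.exists_subset_encard_eq (Order.add_one_le_of_lt hlt)
  obtain ⟨a, b, c, hab, hac, hbc, rfl⟩ := Set.encard_eq_three.mp ht
  exact h a (hts (by simp)) b (hts (by simp)) c (hts (by simp)) hab hac hbc

def IsOrdConnectedOn (C : Set α) (r : α → α → Prop) (Z : Set α) : Prop :=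
  ∀ a ∈ Z, ∀ b ∈ Z, ∀ c ∈ C, r a c → r c b → c ∈ Z

section LinearOrder

variable {C Z W : Set α} {r : α → α → Prop}

theorem IsLinOn.flip (hr : IsLinOn C r) : IsLinOn C (flip r) :=
  ⟨hr.1, fun a ha b hb c hc hab hbc => hr.2.1 c hc b hb a ha hbc hab,
    fun a ha b hb hne => (hr.2.2 a ha b hb hne).symm⟩

theorem IsOrdConnectedOn.flip (hZ : IsOrdConnectedOn C r Z) : IsOrdConnectedOn C (flip r) Z :=
  fun a ha b hb c hc hac hcb => hZ b hb a ha c hc hcb hac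

theorem IsOrdConnectedOn.not_rel_and_rel (hr : IsLinOn C r)
    (hZ : IsOrdConnectedOn C r Z) (hW : IsOrdConnectedOn C r W) (hZC : Z ⊆ C) (hWC : W ⊆ C)
    {x z w : α} (hx : x ∈ Z ∩ W) (hz : z ∈ Z \ W) (hw : w ∈ W \ Z) : ¬(r z x ∧ r w x) := by
  rintro ⟨hzx, hwx⟩
  have hzw : z ≠ w := fun h => hz.2 (h ▸ hw.1)
  rcases hr.2.2 z (hZC hz.1) w (hWC hw.1) hzw with hzw | hwz
  · exact hw.2 (hZ z hz.1 x hx.1 w (hWC hw.1) hzw hwx)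
  · exact hz.2 (hW w hw.1 x hx.2 z (hZC hz.1) hwz hzx)

end LinearOrder

section CloneSet

variable {C X Y Z : Set α} {n : ℕ} {R : Fin n → α → α → Prop}

theorem IsCloneSet.inter_s1 (hX : IsCloneSet C R X) (hY : IsCloneSet C R Y)
    (h : (X ∩ Y).Nonempty) : IsCloneSet C R (X ∩ Y) := by
  refine ⟨h, Set.inter_subset_left.trans hX.2.1, ?_⟩
  rintro c ⟨hcX, hcY⟩ c' ⟨hcX', hcY'⟩ a ⟨haC, haXY⟩ i
  by_cases haX : a ∈ X
  · exact hY.2.2 c hcY c' hcY' a ⟨haC, fun haY => haXY ⟨haX, haY⟩⟩ i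
  · exact hX.2.2 c hcX c' hcX' a ⟨haC, haX⟩ i

/-- A candidate ranked between two clones would have to be ranked the same way relative to both
of them. -/
theorem IsCloneSet.isOrdConnectedOn (hZ : IsCloneSet C R Z) {i : Fin n}
    (hi : IsLinOn C (R i)) : IsOrdConnectedOn C (R i) Z := by
  intro a ha b hb c hc hac hcb
  by_contra hcZ
  have hbc : R i b c := (hZ.2.2 a ha b hb c ⟨hc, hcZ⟩ i).mp hac
  have hbC := hZ.2.1 hb
  exact hi.1 b hbC (hi.2.1 b hbC c hc b hbC hbc hcb)

end CloneSet

theorem IsProperMinimalSuperset.inter_eq {𝓕 : Set (Set α)} {X Z W : Set α}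
    (hZ : IsProperMinimalSuperset 𝓕 X Z) (hW : IsProperMinimalSuperset 𝓕 X W) (hne : Z ≠ W)
    (hZW : Z ∩ W ∈ 𝓕) : Z ∩ W = X := by
  rcases hZ.2.2.2 (Z ∩ W) hZW (Set.subset_inter hZ.2.1 hW.2.1) Set.inter_subset_left
    with h | h
  · exact h
  · rcases hW.2.2.2 Z hZ.1 hZ.2.1 (Set.inter_eq_left.mp h) with h' | h'
    · exact absurd h'.symm hZ.2.2.1
    · exact absurd h' hne

theorem IsProperMinimalSuperset.rel_iff_not_rel {C X Z W : Set α} {n : ℕ}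
    {R : Fin n → α → α → Prop} {i : Fin n} (hi : IsLinOn C (R i))
    (hZ : IsProperMinimalSuperset (cloneSets C R) X Z)
    (hW : IsProperMinimalSuperset (cloneSets C R) X W) (hne : Z ≠ W)
    {x z w : α} (hx : x ∈ X) (hz : z ∈ Z \ X) (hw : w ∈ W \ X) : R i z x ↔ ¬R i w x := by
  have hZW : Z ∩ W = X :=
    hZ.inter_eq hW hne (IsCloneSet.inter_s1 hZ.1 hW.1 ⟨x, hZ.2.1 hx, hW.2.1 hx⟩)
  have hxZW : x ∈ Z ∩ W := hZW ▸ hx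
  have hzW : z ∈ Z \ W := ⟨hz.1, fun h => hz.2 (hZW ▸ ⟨hz.1, h⟩)⟩
  have hwZ : w ∈ W \ Z := ⟨hw.1, fun h => hw.2 (hZW ▸ ⟨h, hw.1⟩)⟩
  have hZC : Z ⊆ C := hZ.1.2.1
  have hWC : W ⊆ C := hW.1.2.1
  have hZo := IsCloneSet.isOrdConnectedOn hZ.1 hi
  have hWo := IsCloneSet.isOrdConnectedOn hW.1 hi
  have above := hZo.not_rel_and_rel hi hWo hZC hWC hxZW hzW hwZ
  have below := hZo.flip.not_rel_and_rel hi.flip hWo.flip hZC hWC hxZW hzW hwZ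
  have hxC : x ∈ C := hZC hxZW.1
  have hz_total := hi.2.2 z (hZC hz.1) x hxC (fun h => hz.2 (h ▸ hx))
  have hw_total := hi.2.2 w (hWC hw.1) x hxC (fun h => hw.2 (h ▸ hx))
  simp only [flip] at below
  tauto

theorem cloneSet_at_most_two_proper_minimal_supersets_general (C : Set α)
    {n : ℕ} (R : Fin n → α → α → Prop) (hR : IsProfile C R)
    (X : Set α) (hX : X ∈ cloneSets C R) :
    {Z | IsProperMinimalSuperset (cloneSets C R) X Z}.encard ≤ 2 := by
  refine Set.encard_le_two_of_no_three_distinct fun Z₁ h₁ Z₂ h₂ Z₃ h₃ h₁₂ h₁₃ h₂₃ => ?_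
  have exists_mem_diff : ∀ {Z}, IsProperMinimalSuperset (cloneSets C R) X Z → (Z \ X).Nonempty :=
    fun hZ => Set.nonempty_of_ssubset (hZ.2.1.ssubset_of_ne hZ.2.2.1)
  obtain ⟨x, hx⟩ := hX.1
  obtain ⟨z₁, hz₁⟩ := exists_mem_diff h₁
  obtain ⟨z₂, hz₂⟩ := exists_mem_diff h₂
  obtain ⟨z₃, hz₃⟩ := exists_mem_diff h₃
  have hi := hR.2 ⟨0, hR.1⟩
  have := h₁.rel_iff_not_rel hi h₂ h₁₂ hx hz₁ hz₂
  have := h₁.rel_iff_not_rel hi h₃ h₁₃ hx hz₁ hz₃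
  have := h₂.rel_iff_not_rel hi h₃ h₂₃ hx hz₂ hz₃
  tauto

theorem cloneSet_at_most_two_proper_minimal_supersets (C : Set α) (hfin : C.Finite)
    {n : ℕ} (R : Fin n → α → α → Prop) (hR : IsProfile C R)
    (X : Set α) (hX : X ∈ cloneSets C R) :
    {Z | IsProperMinimalSuperset (cloneSets C R) X Z}.encard ≤ 2 :=
  cloneSet_at_most_two_proper_minimal_supersets_general C R hR X hX
end

section
/- If 𝒞 is a clone structure, i.e., 𝒞 = 𝒞(R) for some preference profile R over a finite candidate set C, then 𝒞 does not contain a bicycle chain: no finite collection of sets A_0, …, A_{k-1} ∈ 𝒞 forms a bicycle chain. -/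
variable {α : Type*}

/-- The family `𝓕` contains a bicycle chain. -/
def HasBicycleChain (𝓕 : Set (Set α)) : Prop :=
  ∃ (k : ℕ) (A : ZMod k → Set α), 3 ≤ k ∧ (∀ i, A i ∈ 𝓕) ∧
    ∀ i : ZMod k,
      Bowtie (A (i - 1)) (A i) ∧ A (i - 1) ∩ A i ∩ A (i + 1) = ∅ ∧
        A i ⊆ A (i - 1) ∪ A (i + 1)

/-!
Fix any voter and read `C` as a line ordered by that voter. Every clone set is then an interval.
Pick a point `x i` in each `A i ∩ A (i + 1)` and let `x i` be the largest of them. Both `x (i - 1)`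
and `x (i + 1)` lie below `x i`; whichever of them is smaller lies between the other one and `x i`,
so it belongs to a third interval of the chain, contradicting that three consecutive sets of a
bicycle chain have empty intersection.
-/

theorem Set.OrdConnected.mem_or_mem_of_le {β : Type*} [LinearOrder β] {X Y : Set β}
    (hX : X.OrdConnected) (hY : Y.OrdConnected) {a b c : β} (ha : a ∈ X) (hb : b ∈ X ∩ Y)
    (hc : c ∈ Y) (hab : a ≤ b) (hcb : c ≤ b) : a ∈ Y ∨ c ∈ X := by
  rcases le_total a c with hac | hca
  · exact Or.inr (hX.out ha hb.1 ⟨hac, hcb⟩)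
  · exact Or.inl (hY.out hc hb.2 ⟨hca, hab⟩)

theorem Set.OrdConnected.exists_inter_inter_nonempty {β ι : Type*} [LinearOrder β]
    [AddGroupWithOne ι] [Finite ι] {A : ι → Set β} (hA : ∀ i, (A i).OrdConnected)
    (hmeet : ∀ i, (A i ∩ A (i + 1)).Nonempty) :
    ∃ i, (A (i - 1) ∩ A i ∩ A (i + 1)).Nonempty := by
  choose x hx using hmeet
  obtain ⟨i, hmax⟩ := Finite.exists_max x
  have hprev : x (i - 1) ∈ A (i - 1) ∩ A i := by simpa using hx (i - 1)
  rcases (hA i).mem_or_mem_of_le (hA (i + 1)) hprev.2 (hx i) (hx (i + 1)).1 (hmax _) (hmax _)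
    with hprev_mem | hnext_mem
  · exact ⟨i, x (i - 1), hprev, hprev_mem⟩
  · refine ⟨i + 1, x (i + 1), ?_⟩
    rw [add_sub_cancel_right]
    exact ⟨⟨hnext_mem, (hx (i + 1)).1⟩, (hx (i + 1)).2⟩

namespace IsLinOn

variable {C : Set α} {r : α → α → Prop}

theorem isStrictTotalOrder (h : IsLinOn C r) : IsStrictTotalOrder C (fun a b => r a b) where
  trichotomous a b hab hba := Subtype.ext <| by
    by_contra hne
    exact (h.2.2 a a.2 b b.2 hne).elim hab hba
  irrefl a := h.1 a a.2
  trans a b c := h.2.1 a a.2 b b.2 c c.2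

noncomputable abbrev linearOrder (h : IsLinOn C r) : LinearOrder C :=
  haveI := h.isStrictTotalOrder
  open Classical in linearOrderOfSTO (fun a b : C => r a b)

end IsLinOn

namespace IsCloneSet

variable {C X : Set α} {n : ℕ} {R : Fin n → α → α → Prop}

theorem mem_of_rel_of_rel (hX : IsCloneSet C R X) {i : Fin n} (hi : IsLinOn C (R i))
    {a b c : α} (ha : a ∈ X) (hc : c ∈ X) (hbC : b ∈ C) (hab : R i a b) (hbc : R i b c) :
    b ∈ X := by
  by_contra hbX
  have hcb : R i c b := (hX.2.2 a ha c hc b ⟨hbC, hbX⟩ i).1 hab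
  exact hi.1 b hbC (hi.2.1 b hbC c (hX.2.1 hc) b hbC hbc hcb)

theorem ordConnected (hX : IsCloneSet C R X) {i : Fin n} (hi : IsLinOn C (R i)) :
    letI := hi.linearOrder
    (Subtype.val ⁻¹' X : Set C).OrdConnected := by
  let := hi.linearOrder
  refine ⟨fun a ha c hc b ⟨hab, hbc⟩ => ?_⟩
  obtain rfl | hab : a = b ∨ R i a b := hab
  · exact ha
  obtain rfl | hbc : b = c ∨ R i b c := hbc
  · exact hc
  exact hX.mem_of_rel_of_rel hi ha hc b.2 hab hbc

end IsCloneSet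

theorem cloneSets_no_bicycle_chain_general (C : Set α)
    {n : ℕ} (R : Fin n → α → α → Prop) (hR : IsProfile C R) :
    ¬HasBicycleChain (cloneSets C R) := by
  rintro ⟨k, A, hk, hA, hchain⟩
  have : NeZero k := ⟨by omega⟩
  have hlin := hR.2 ⟨0, hR.1⟩
  let := hlin.linearOrder
  have hmeet (i : ZMod k) :
      (Subtype.val ⁻¹' A i ∩ Subtype.val ⁻¹' A (i + 1) : Set C).Nonempty := by
    obtain ⟨c, hc⟩ := (hchain (i + 1)).1.1
    rw [add_sub_cancel_right] at hc
    exact ⟨⟨c, (hA i).2.1 hc.1⟩, hc⟩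
  obtain ⟨i, c, hc⟩ :=
    Set.OrdConnected.exists_inter_inter_nonempty (fun i => (hA i).ordConnected hlin) hmeet
  exact (hchain i).2.1.subset hc

theorem cloneSets_no_bicycle_chain (C : Set α) (hfin : C.Finite)
    {n : ℕ} (R : Fin n → α → α → Prop) (hR : IsProfile C R) :
    ¬HasBicycleChain (cloneSets C R) :=
  cloneSets_no_bicycle_chain_general C R hR
end

section
/- Let ℰ and ℱ be families of subsets of disjoint finite sets E and F, respectively, each satisfying axioms A1–A5 (over E and F, respectively). Then for any e ∈ E, the embedded family ℰ(e → ℱ), regarded as a family of subsets of (E \ {e}) ∪ F, also satisfies axioms A1–A5. -/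
variable {α : Type*}

/-- A family `𝓕` of subsets of `F` satisfies axioms A1–A5. -/
def SatisfiesAxioms (F : Set α) (𝓕 : Set (Set α)) : Prop :=
  (∀ X ∈ 𝓕, X ⊆ F) ∧
    ((∀ f ∈ F, ({f} : Set α) ∈ 𝓕) ∧ (∅ : Set α) ∉ 𝓕 ∧ F ∈ 𝓕) ∧
    (∀ C₁ ∈ 𝓕, ∀ C₂ ∈ 𝓕, (C₁ ∩ C₂).Nonempty → C₁ ∪ C₂ ∈ 𝓕 ∧ C₁ ∩ C₂ ∈ 𝓕) ∧
    (∀ C₁ ∈ 𝓕, ∀ C₂ ∈ 𝓕, Bowtie C₁ C₂ → C₁ \ C₂ ∈ 𝓕 ∧ C₂ \ C₁ ∈ 𝓕) ∧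
    (∀ X ∈ 𝓕, {Z | IsProperMinimalSuperset 𝓕 X Z}.encard ≤ 2) ∧
    ¬HasBicycleChain 𝓕

/-- The embedding `𝓔(e → 𝓓)` of a family `𝓓` over `D` into `𝓔` at element `e`:
each set of `𝓔` containing `e` has `e` replaced by `D`; the sets of `𝓓` are added. -/
def embedFamily (𝓔 : Set (Set α)) (e : α) (D : Set α) (𝓓 : Set (Set α)) :
    Set (Set α) :=
  𝓓 ∪ {Y | ∃ X ∈ 𝓔, (e ∈ X ∧ Y = (X \ {e}) ∪ D) ∨ (e ∉ X ∧ Y = X)}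

/-!
On sets disjoint from `D`, replacing `e` by `D` is injective and preserves `∪`, `∩`, `\`, `⊆`,
emptiness and `⋈`; hence every axiom involving only embedded members of `𝓔` is inherited from
`𝓔`. An embedded set either contains `D` (if it contained `e`) or is disjoint from `D`, so it never
meets a member of `𝓓` non-trivially. This settles the mixed cases, and along a bicycle chain it
forces either all members or none to lie in `𝓓`.
-/

section Bowtie

variable {X Y : Set α}

theorem Bowtie.symm (h : Bowtie X Y) : Bowtie Y X :=
  ⟨Set.inter_comm X Y ▸ h.1, h.2.2, h.2.1⟩

theorem Bowtie.not_subset (h : Bowtie X Y) : ¬X ⊆ Y := fun hXY =>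
  h.2.1.ne_empty (Set.sdiff_eq_empty.mpr hXY)

theorem Bowtie.not_disjoint (h : Bowtie X Y) : ¬Disjoint X Y :=
  Set.not_disjoint_iff_nonempty_inter.mpr h.1

end Bowtie

def embedSet (e : α) (D X : Set α) : Set α :=
  {a | a ∈ X ∧ a ≠ e ∨ e ∈ X ∧ a ∈ D}

section embedSet

variable {e : α} {D X Y C : Set α}

theorem mem_embedSet {a : α} : a ∈ embedSet e D X ↔ a ∈ X ∧ a ≠ e ∨ e ∈ X ∧ a ∈ D :=
  Iff.rfl

theorem embedSet_of_mem (h : e ∈ X) : embedSet e D X = X \ {e} ∪ D := by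
  ext a
  simp [mem_embedSet, h]

theorem embedSet_of_notMem (h : e ∉ X) : embedSet e D X = X := by
  ext a
  simp only [mem_embedSet, h, false_and, or_false, and_iff_left_iff_imp]
  rintro ha rfl
  exact h ha

theorem embedSet_singleton : embedSet e D {e} = D := by
  ext a
  simp [mem_embedSet]

theorem embedSet_union : embedSet e D (X ∪ Y) = embedSet e D X ∪ embedSet e D Y := by
  ext a
  simp only [mem_embedSet, Set.mem_union]
  tauto

theorem embedSet_inter (hX : Disjoint X D) (hY : Disjoint Y D) :
    embedSet e D (X ∩ Y) = embedSet e D X ∩ embedSet e D Y := by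
  ext a
  have hXa := @Set.disjoint_right.mp hX a
  have hYa := @Set.disjoint_right.mp hY a
  simp only [mem_embedSet, Set.mem_inter_iff]
  tauto

theorem embedSet_sdiff (hX : Disjoint X D) (hY : Disjoint Y D) :
    embedSet e D (X \ Y) = embedSet e D X \ embedSet e D Y := by
  ext a
  have hXa := @Set.disjoint_right.mp hX a
  have hYa := @Set.disjoint_right.mp hY a
  simp only [mem_embedSet, Set.mem_sdiff]
  tauto

theorem embedSet_nonempty (hD : D.Nonempty) : (embedSet e D X).Nonempty ↔ X.Nonempty := by
  refine ⟨fun ⟨a, ha⟩ => ?_, fun ⟨a, ha⟩ => ?_⟩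
  · rcases ha with ⟨ha, -⟩ | ⟨he, -⟩
    exacts [⟨a, ha⟩, ⟨e, he⟩]
  · by_cases he : e ∈ X
    · exact hD.mono fun d hd => Or.inr ⟨he, hd⟩
    · exact ⟨a, Or.inl ⟨ha, ne_of_mem_of_not_mem ha he⟩⟩

theorem embedSet_eq_empty (hD : D.Nonempty) : embedSet e D X = ∅ ↔ X = ∅ := by
  simpa only [Set.not_nonempty_iff_eq_empty] using (embedSet_nonempty hD).not

theorem embedSet_subset_embedSet (hD : D.Nonempty) (hX : Disjoint X D) (hY : Disjoint Y D) :
    embedSet e D X ⊆ embedSet e D Y ↔ X ⊆ Y := by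
  rw [← Set.sdiff_eq_empty, ← embedSet_sdiff hX hY, embedSet_eq_empty hD, Set.sdiff_eq_empty]

theorem bowtie_embedSet (hD : D.Nonempty) (hX : Disjoint X D) (hY : Disjoint Y D) :
    Bowtie (embedSet e D X) (embedSet e D Y) ↔ Bowtie X Y := by
  simp only [Bowtie, ← embedSet_inter hX hY, ← embedSet_sdiff hX hY, ← embedSet_sdiff hY hX,
    embedSet_nonempty hD]

theorem subset_embedSet_or_disjoint (hX : Disjoint X D) :
    D ⊆ embedSet e D X ∨ Disjoint (embedSet e D X) D := by
  by_cases he : e ∈ X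
  · exact Or.inl fun d hd => Or.inr ⟨he, hd⟩
  · rw [embedSet_of_notMem he]
    exact Or.inr hX

theorem embedSet_eq_of_subset (hX : Disjoint X D) (hne : X.Nonempty)
    (h : embedSet e D X ⊆ D) : embedSet e D X = D := by
  by_cases he : e ∈ X
  · exact h.antisymm fun d hd => Or.inr ⟨he, hd⟩
  · obtain ⟨a, ha⟩ := hne
    rw [embedSet_of_notMem he] at h
    exact absurd (h ha) (Set.disjoint_left.mp hX ha)

theorem not_bowtie_embedSet (hC : C ⊆ D) (hX : Disjoint X D) :
    ¬Bowtie C (embedSet e D X) := fun h =>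
  (subset_embedSet_or_disjoint hX).elim (fun hD => h.not_subset (hC.trans hD))
    fun hD => h.not_disjoint (hD.mono_right hC).symm

theorem subset_embedSet_of_inter_nonempty (hC : C ⊆ D) (hX : Disjoint X D)
    (hne : (C ∩ embedSet e D X).Nonempty) : C ⊆ embedSet e D X :=
  (subset_embedSet_or_disjoint hX).elim hC.trans fun hD =>
    absurd ((hD.mono_right hC).symm) (Set.not_disjoint_iff_nonempty_inter.mpr hne)

end embedSet

namespace SatisfiesAxioms

variable {F X : Set α} {𝓕 : Set (Set α)}

theorem subset (h : SatisfiesAxioms F 𝓕) (hX : X ∈ 𝓕) : X ⊆ F := h.1 X hX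

theorem singleton_mem (h : SatisfiesAxioms F 𝓕) {f : α} (hf : f ∈ F) : {f} ∈ 𝓕 :=
  h.2.1.1 f hf

theorem empty_notMem (h : SatisfiesAxioms F 𝓕) : ∅ ∉ 𝓕 := h.2.1.2.1

theorem self_mem (h : SatisfiesAxioms F 𝓕) : F ∈ 𝓕 := h.2.1.2.2

theorem nonempty_of_mem (h : SatisfiesAxioms F 𝓕) (hX : X ∈ 𝓕) : X.Nonempty :=
  Set.nonempty_iff_ne_empty.mpr fun h0 => h.empty_notMem (h0 ▸ hX)

theorem union_mem_and_inter_mem (h : SatisfiesAxioms F 𝓕) {C₁ C₂ : Set α} (h₁ : C₁ ∈ 𝓕)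
    (h₂ : C₂ ∈ 𝓕) (hne : (C₁ ∩ C₂).Nonempty) : C₁ ∪ C₂ ∈ 𝓕 ∧ C₁ ∩ C₂ ∈ 𝓕 :=
  h.2.2.1 C₁ h₁ C₂ h₂ hne

theorem sdiff_mem_and_sdiff_mem (h : SatisfiesAxioms F 𝓕) {C₁ C₂ : Set α} (h₁ : C₁ ∈ 𝓕)
    (h₂ : C₂ ∈ 𝓕) (hbt : Bowtie C₁ C₂) : C₁ \ C₂ ∈ 𝓕 ∧ C₂ \ C₁ ∈ 𝓕 :=
  h.2.2.2.1 C₁ h₁ C₂ h₂ hbt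

theorem encard_properMinimalSupersets_le (h : SatisfiesAxioms F 𝓕) (hX : X ∈ 𝓕) :
    {Z | IsProperMinimalSuperset 𝓕 X Z}.encard ≤ 2 :=
  h.2.2.2.2.1 X hX

theorem not_hasBicycleChain (h : SatisfiesAxioms F 𝓕) : ¬HasBicycleChain 𝓕 := h.2.2.2.2.2

end SatisfiesAxioms

section ProperMinimalSuperset

variable {𝓐 𝓑 : Set (Set α)} {X Z : Set α}

theorem IsProperMinimalSuperset.mono (h𝓐 : 𝓐 ⊆ 𝓑) (h : IsProperMinimalSuperset 𝓑 X Z)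
    (hZ : Z ∈ 𝓐) : IsProperMinimalSuperset 𝓐 X Z :=
  ⟨hZ, h.2.1, h.2.2.1, fun Y hY => h.2.2.2 Y (h𝓐 hY)⟩

theorem IsProperMinimalSuperset.of_image {f : Set α → Set α} (hf𝓑 : Set.MapsTo f 𝓐 𝓑)
    (hf : ∀ X ∈ 𝓐, ∀ Y ∈ 𝓐, f X ⊆ f Y ↔ X ⊆ Y) (hX : X ∈ 𝓐) (hZ : Z ∈ 𝓐)
    (h : IsProperMinimalSuperset 𝓑 (f X) (f Z)) : IsProperMinimalSuperset 𝓐 X Z := by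
  have hf_inj : ∀ X ∈ 𝓐, ∀ Y ∈ 𝓐, f X = f Y → X = Y := fun X hX Y hY hXY =>
    ((hf X hX Y hY).mp hXY.subset).antisymm ((hf Y hY X hX).mp hXY.symm.subset)
  obtain ⟨-, hXZ, hne, hmin⟩ := h
  refine ⟨hZ, (hf X hX Z hZ).mp hXZ, fun hXZ => hne (congrArg f hXZ), fun Y hY hXY hYZ => ?_⟩
  exact (hmin (f Y) (hf𝓑 hY) ((hf X hX Y hY).mpr hXY) ((hf Y hY Z hZ).mpr hYZ)).imp
    (hf_inj Y hY X hX) (hf_inj Y hY Z hZ)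

end ProperMinimalSuperset

theorem ZMod.iff_of_forall_iff_add_one {k : ℕ} {P : ZMod k → Prop} (h : ∀ i, P i ↔ P (i + 1))
    (i j : ZMod k) : P i ↔ P j := by
  obtain ⟨n, hn⟩ := ZMod.intCast_surjective (j - i)
  suffices ∀ n : ℤ, P i ↔ P (i + n) by simpa [hn] using this n
  intro n
  induction n with
  | zero => simp
  | succ n ih => rw [ih, h, Int.cast_add, Int.cast_one, add_assoc]
  | pred n ih =>
    rw [ih, h (i + ((-n - 1 : ℤ) : ZMod k))]
    push_cast
    ring_nf

def IsBicycleChain {k : ℕ} (A : ZMod k → Set α) : Prop :=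
  ∀ i : ZMod k,
    Bowtie (A (i - 1)) (A i) ∧ A (i - 1) ∩ A i ∩ A (i + 1) = ∅ ∧ A i ⊆ A (i - 1) ∪ A (i + 1)

theorem IsBicycleChain.of_embedSet {e : α} {D : Set α} {k : ℕ} {X : ZMod k → Set α}
    (hD : D.Nonempty) (hX : ∀ i, Disjoint (X i) D)
    (h : IsBicycleChain fun i => embedSet e D (X i)) : IsBicycleChain X := by
  intro i
  obtain ⟨hbt, hinter, hcover⟩ := h i
  have hX₁₂ : Disjoint (X (i - 1) ∩ X i) D := (hX _).mono_left Set.inter_subset_left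
  have hX₁₃ : Disjoint (X (i - 1) ∪ X (i + 1)) D := (hX _).union_left (hX _)
  rw [← embedSet_inter (hX _) (hX _), ← embedSet_inter hX₁₂ (hX _)] at hinter
  rw [← embedSet_union] at hcover
  exact ⟨(bowtie_embedSet hD (hX _) (hX _)).mp hbt, (embedSet_eq_empty hD).mp hinter,
    (embedSet_subset_embedSet hD (hX _) hX₁₃).mp hcover⟩

section embedFamily

variable {E D Y : Set α} {𝓔 𝓓 : Set (Set α)} {e : α}

theorem embedFamily_eq : embedFamily 𝓔 e D 𝓓 = 𝓓 ∪ embedSet e D '' 𝓔 := by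
  ext Y
  refine or_congr_right ⟨?_, ?_⟩
  · rintro ⟨X, hX, ⟨he, rfl⟩ | ⟨he, rfl⟩⟩
    · exact ⟨X, hX, embedSet_of_mem he⟩
    · exact ⟨_, hX, embedSet_of_notMem he⟩
  · rintro ⟨X, hX, rfl⟩
    refine ⟨X, hX, ?_⟩
    by_cases he : e ∈ X
    exacts [Or.inl ⟨he, embedSet_of_mem he⟩, Or.inr ⟨he, embedSet_of_notMem he⟩]

theorem mem_embedFamily_iff :
    Y ∈ embedFamily 𝓔 e D 𝓓 ↔ Y ∈ 𝓓 ∨ ∃ X ∈ 𝓔, embedSet e D X = Y := by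
  rw [embedFamily_eq]
  rfl

theorem mem_embedFamily_of_mem (hY : Y ∈ 𝓓) : Y ∈ embedFamily 𝓔 e D 𝓓 :=
  mem_embedFamily_iff.mpr (Or.inl hY)

theorem embedSet_mem_embedFamily {X : Set α} (hX : X ∈ 𝓔) :
    embedSet e D X ∈ embedFamily 𝓔 e D 𝓓 :=
  mem_embedFamily_iff.mpr (Or.inr ⟨X, hX, rfl⟩)

theorem subset_of_mem_embedFamily (h𝓔 : SatisfiesAxioms E 𝓔) (h𝓓 : SatisfiesAxioms D 𝓓)
    (hY : Y ∈ embedFamily 𝓔 e D 𝓓) : Y ⊆ E \ {e} ∪ D := by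
  rcases mem_embedFamily_iff.mp hY with hY | ⟨X, hX, rfl⟩
  · exact (h𝓓.subset hY).trans Set.subset_union_right
  · rintro a (⟨ha, hae⟩ | ⟨-, ha⟩)
    exacts [Or.inl ⟨h𝓔.subset hX ha, hae⟩, Or.inr ha]

theorem singleton_mem_embedFamily (h𝓔 : SatisfiesAxioms E 𝓔) (h𝓓 : SatisfiesAxioms D 𝓓)
    {f : α} (hf : f ∈ E \ {e} ∪ D) : {f} ∈ embedFamily 𝓔 e D 𝓓 := by
  rcases hf with ⟨hfE, hfe⟩ | hfD
  · have hef : e ∉ ({f} : Set α) := by rintro rfl; exact hfe rfl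
    rw [← embedSet_of_notMem (D := D) hef]
    exact embedSet_mem_embedFamily (h𝓔.singleton_mem hfE)
  · exact mem_embedFamily_of_mem (h𝓓.singleton_mem hfD)

theorem empty_notMem_embedFamily (h𝓔 : SatisfiesAxioms E 𝓔) (h𝓓 : SatisfiesAxioms D 𝓓) :
    ∅ ∉ embedFamily 𝓔 e D 𝓓 := by
  rintro h
  rcases mem_embedFamily_iff.mp h with h | ⟨X, hX, hX0⟩
  · exact h𝓓.empty_notMem h
  · exact h𝓔.empty_notMem ((embedSet_eq_empty (h𝓓.nonempty_of_mem h𝓓.self_mem)).mp hX0 ▸ hX)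

theorem mem_embedFamily_self (h𝓔 : SatisfiesAxioms E 𝓔) (he : e ∈ E) :
    E \ {e} ∪ D ∈ embedFamily 𝓔 e D 𝓓 :=
  embedSet_of_mem he ▸ embedSet_mem_embedFamily h𝓔.self_mem

theorem mem_of_mem_embedFamily_of_subset (hdisj : Disjoint E D) (h𝓔 : SatisfiesAxioms E 𝓔)
    (h𝓓 : SatisfiesAxioms D 𝓓) (hY : Y ∈ embedFamily 𝓔 e D 𝓓) (hYD : Y ⊆ D) : Y ∈ 𝓓 := by
  rcases mem_embedFamily_iff.mp hY with hY | ⟨X, hX, rfl⟩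
  · exact hY
  · rw [embedSet_eq_of_subset (hdisj.mono_left (h𝓔.subset hX)) (h𝓔.nonempty_of_mem hX) hYD]
    exact h𝓓.self_mem

theorem subset_of_bowtie_of_subset (hdisj : Disjoint E D) (h𝓔 : SatisfiesAxioms E 𝓔)
    (h𝓓 : SatisfiesAxioms D 𝓓) {C : Set α} (hC : C ⊆ D) (hY : Y ∈ embedFamily 𝓔 e D 𝓓)
    (h : Bowtie C Y) : Y ⊆ D := by
  rcases mem_embedFamily_iff.mp hY with hY | ⟨X, hX, rfl⟩
  · exact h𝓓.subset hY
  · exact absurd h (not_bowtie_embedSet hC (hdisj.mono_left (h𝓔.subset hX)))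

theorem union_mem_and_inter_mem_embedFamily (hdisj : Disjoint E D) (h𝓔 : SatisfiesAxioms E 𝓔)
    (h𝓓 : SatisfiesAxioms D 𝓓) {C₁ C₂ : Set α} (h₁ : C₁ ∈ embedFamily 𝓔 e D 𝓓)
    (h₂ : C₂ ∈ embedFamily 𝓔 e D 𝓓) (hne : (C₁ ∩ C₂).Nonempty) :
    C₁ ∪ C₂ ∈ embedFamily 𝓔 e D 𝓓 ∧ C₁ ∩ C₂ ∈ embedFamily 𝓔 e D 𝓓 := by
  have hD := h𝓓.nonempty_of_mem h𝓓.self_mem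
  have mixed : ∀ {C X}, C ∈ 𝓓 → X ∈ 𝓔 → (C ∩ embedSet e D X).Nonempty →
      C ∪ embedSet e D X ∈ embedFamily 𝓔 e D 𝓓 ∧ C ∩ embedSet e D X ∈ embedFamily 𝓔 e D 𝓓 := by
    intro C X hC hX hne
    have hCX := subset_embedSet_of_inter_nonempty (h𝓓.subset hC)
      (hdisj.mono_left (h𝓔.subset hX)) hne
    rw [Set.union_eq_right.mpr hCX, Set.inter_eq_left.mpr hCX]
    exact ⟨embedSet_mem_embedFamily hX, mem_embedFamily_of_mem hC⟩
  rcases mem_embedFamily_iff.mp h₁ with h₁ | ⟨X₁, hX₁, rfl⟩ <;>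
    rcases mem_embedFamily_iff.mp h₂ with h₂ | ⟨X₂, hX₂, rfl⟩
  · exact (h𝓓.union_mem_and_inter_mem h₁ h₂ hne).imp mem_embedFamily_of_mem
      mem_embedFamily_of_mem
  · exact mixed h₁ hX₂ hne
  · rw [Set.inter_comm] at hne ⊢
    rw [Set.union_comm]
    exact mixed h₂ hX₁ hne
  · have hX₁D := hdisj.mono_left (h𝓔.subset hX₁)
    have hX₂D := hdisj.mono_left (h𝓔.subset hX₂)
    rw [← embedSet_inter hX₁D hX₂D] at hne ⊢
    rw [← embedSet_union]
    exact (h𝓔.union_mem_and_inter_mem hX₁ hX₂ ((embedSet_nonempty hD).mp hne)).imp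
      embedSet_mem_embedFamily embedSet_mem_embedFamily

theorem sdiff_mem_and_sdiff_mem_embedFamily (hdisj : Disjoint E D) (h𝓔 : SatisfiesAxioms E 𝓔)
    (h𝓓 : SatisfiesAxioms D 𝓓) {C₁ C₂ : Set α} (h₁ : C₁ ∈ embedFamily 𝓔 e D 𝓓)
    (h₂ : C₂ ∈ embedFamily 𝓔 e D 𝓓) (hbt : Bowtie C₁ C₂) :
    C₁ \ C₂ ∈ embedFamily 𝓔 e D 𝓓 ∧ C₂ \ C₁ ∈ embedFamily 𝓔 e D 𝓓 := by
  have hD := h𝓓.nonempty_of_mem h𝓓.self_mem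
  rcases mem_embedFamily_iff.mp h₁ with h₁ | ⟨X₁, hX₁, rfl⟩
  · have h₂D := subset_of_bowtie_of_subset hdisj h𝓔 h𝓓 (h𝓓.subset h₁) h₂ hbt
    exact (h𝓓.sdiff_mem_and_sdiff_mem h₁ (mem_of_mem_embedFamily_of_subset hdisj h𝓔 h𝓓 h₂ h₂D)
      hbt).imp mem_embedFamily_of_mem mem_embedFamily_of_mem
  rcases mem_embedFamily_iff.mp h₂ with h₂ | ⟨X₂, hX₂, rfl⟩
  · exact absurd hbt.symm (not_bowtie_embedSet (h𝓓.subset h₂) (hdisj.mono_left (h𝓔.subset hX₁)))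
  have hX₁D := hdisj.mono_left (h𝓔.subset hX₁)
  have hX₂D := hdisj.mono_left (h𝓔.subset hX₂)
  rw [← embedSet_sdiff hX₁D hX₂D, ← embedSet_sdiff hX₂D hX₁D]
  exact (h𝓔.sdiff_mem_and_sdiff_mem hX₁ hX₂ ((bowtie_embedSet hD hX₁D hX₂D).mp hbt)).imp
    embedSet_mem_embedFamily embedSet_mem_embedFamily

theorem encard_properMinimalSupersets_embedFamily_le (hdisj : Disjoint E D)
    (h𝓔 : SatisfiesAxioms E 𝓔) (h𝓓 : SatisfiesAxioms D 𝓓) (he : e ∈ E)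
    (hY : Y ∈ embedFamily 𝓔 e D 𝓓) :
    {Z | IsProperMinimalSuperset (embedFamily 𝓔 e D 𝓓) Y Z}.encard ≤ 2 := by
  have hD := h𝓓.nonempty_of_mem h𝓓.self_mem
  have hdisj𝓔 : ∀ X ∈ 𝓔, Disjoint X D := fun X hX => hdisj.mono_left (h𝓔.subset hX)
  obtain ⟨X, hX, rfl⟩ | ⟨hY, hYD⟩ : (∃ X ∈ 𝓔, embedSet e D X = Y) ∨ (Y ∈ 𝓓 ∧ Y ≠ D) := by
    rcases mem_embedFamily_iff.mp hY with hY | hY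
    · by_cases hYD : Y = D
      · exact Or.inl ⟨{e}, h𝓔.singleton_mem he, hYD ▸ embedSet_singleton⟩
      · exact Or.inr ⟨hY, hYD⟩
    · exact Or.inl hY
  · refine (Set.encard_le_encard fun Z hZ => ?_).trans
      ((Set.encard_image_le (embedSet e D) _).trans (h𝓔.encard_properMinimalSupersets_le hX))
    -- a proper superset of `embedSet e D X` inside `D` would force `embedSet e D X = D`
    obtain ⟨X', hX', rfl⟩ : ∃ X' ∈ 𝓔, embedSet e D X' = Z := by
      rcases mem_embedFamily_iff.mp hZ.1 with hZ𝓓 | hZ'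
      · have hXZ := hZ.2.1.trans (h𝓓.subset hZ𝓓)
        have hXD := embedSet_eq_of_subset (hdisj𝓔 X hX) (h𝓔.nonempty_of_mem hX) hXZ
        exact absurd (hZ.2.1.antisymm ((h𝓓.subset hZ𝓓).trans hXD.ge)) hZ.2.2.1
      · exact hZ'
    refine ⟨X', hZ.of_image (fun X hX => embedSet_mem_embedFamily hX) ?_ hX hX', rfl⟩
    exact fun X hX X' hX' => embedSet_subset_embedSet hD (hdisj𝓔 X hX) (hdisj𝓔 X' hX')
  · refine (Set.encard_le_encard fun Z hZ => ?_).trans (h𝓓.encard_properMinimalSupersets_le hY)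
    refine hZ.mono (fun W => mem_embedFamily_of_mem) ?_
    rcases mem_embedFamily_iff.mp hZ.1 with hZ𝓓 | ⟨X, hX, rfl⟩
    · exact hZ𝓓
    -- `D` lies between `Y` and `embedSet e D X`, so minimality forces `embedSet e D X = D`
    have hDX : D ⊆ embedSet e D X := subset_embedSet_of_inter_nonempty subset_rfl (hdisj𝓔 X hX)
      ((h𝓓.nonempty_of_mem hY).mono (Set.subset_inter (h𝓓.subset hY) hZ.2.1))
    rcases hZ.2.2.2 D (mem_embedFamily_of_mem h𝓓.self_mem) (h𝓓.subset hY) hDX with h | h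
    · exact absurd h.symm hYD
    · exact h ▸ h𝓓.self_mem

theorem not_hasBicycleChain_embedFamily (hdisj : Disjoint E D) (h𝓔 : SatisfiesAxioms E 𝓔)
    (h𝓓 : SatisfiesAxioms D 𝓓) : ¬HasBicycleChain (embedFamily 𝓔 e D 𝓓) := by
  rintro ⟨k, A, hk, hA, hchain⟩
  -- consecutive members of a chain intersect non-trivially, so they lie both inside `D` or both not
  have hstep : ∀ i, A i ⊆ D ↔ A (i + 1) ⊆ D := fun i => by
    have hbt : Bowtie (A i) (A (i + 1)) := by simpa using (hchain (i + 1)).1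
    exact ⟨fun h => subset_of_bowtie_of_subset hdisj h𝓔 h𝓓 h (hA _) hbt,
      fun h => subset_of_bowtie_of_subset hdisj h𝓔 h𝓓 h (hA _) hbt.symm⟩
  by_cases h0 : A 0 ⊆ D
  · refine h𝓓.not_hasBicycleChain ⟨k, A, hk, fun i => ?_, hchain⟩
    exact mem_of_mem_embedFamily_of_subset hdisj h𝓔 h𝓓 (hA i)
      ((ZMod.iff_of_forall_iff_add_one hstep 0 i).mp h0)
  · have hX : ∀ i, ∃ X ∈ 𝓔, embedSet e D X = A i := fun i =>
      (mem_embedFamily_iff.mp (hA i)).resolve_left fun hi =>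
        h0 ((ZMod.iff_of_forall_iff_add_one hstep i 0).mp (h𝓓.subset hi))
    choose X hX hXA using hX
    refine h𝓔.not_hasBicycleChain ⟨k, X, hk, hX, ?_⟩
    refine IsBicycleChain.of_embedSet (e := e) (h𝓓.nonempty_of_mem h𝓓.self_mem)
      (fun i => hdisj.mono_left (h𝓔.subset (hX i))) ?_
    rwa [funext hXA]

end embedFamily

theorem embedFamily_satisfies_axioms_general (E D : Set α)
    (hdisj : Disjoint E D) (𝓔 𝓓 : Set (Set α))
    (h𝓔 : SatisfiesAxioms E 𝓔) (h𝓓 : SatisfiesAxioms D 𝓓)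
    (e : α) (he : e ∈ E) :
    SatisfiesAxioms ((E \ {e}) ∪ D) (embedFamily 𝓔 e D 𝓓) :=
  ⟨fun _ => subset_of_mem_embedFamily h𝓔 h𝓓,
    ⟨fun _ => singleton_mem_embedFamily h𝓔 h𝓓, empty_notMem_embedFamily h𝓔 h𝓓,
      mem_embedFamily_self h𝓔 he⟩,
    fun _ h₁ _ h₂ => union_mem_and_inter_mem_embedFamily hdisj h𝓔 h𝓓 h₁ h₂,
    fun _ h₁ _ h₂ => sdiff_mem_and_sdiff_mem_embedFamily hdisj h𝓔 h𝓓 h₁ h₂,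
    fun _ => encard_properMinimalSupersets_embedFamily_le hdisj h𝓔 h𝓓 he,
    not_hasBicycleChain_embedFamily hdisj h𝓔 h𝓓⟩

theorem embedFamily_satisfies_axioms (E D : Set α) (hE : E.Finite) (hD : D.Finite)
    (hdisj : Disjoint E D) (𝓔 𝓓 : Set (Set α))
    (h𝓔 : SatisfiesAxioms E 𝓔) (h𝓓 : SatisfiesAxioms D 𝓓)
    (e : α) (he : e ∈ E) :
    SatisfiesAxioms ((E \ {e}) ∪ D) (embedFamily 𝓔 e D 𝓓) :=
  embedFamily_satisfies_axioms_general E D hdisj 𝓔 𝓓 h𝓔 h𝓓 e he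
end

section
/- Let 𝒞 be a clone structure over a finite set C, and let ℬ and 𝒟 be two distinct proper irreducible subfamilies of 𝒞 with supports B ⊆ C and D ⊆ C, respectively. Then B ∩ D = ∅. -/
variable {α : Type*}

/-- `𝓒` is a clone structure over `C`. -/
def IsCloneStructure (C : Set α) (𝓒 : Set (Set α)) : Prop :=
  ∃ (n : ℕ) (R : Fin n → α → α → Prop), IsProfile C R ∧ 𝓒 = cloneSets C R

/-- `Y` is a proper subset of `Z`: `Y ⊆ Z` and `1 < |Y| < |Z|`. -/
def IsProperSubsetOf (Y Z : Set α) : Prop :=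
  Y ⊆ Z ∧ 1 < Y.ncard ∧ Y.ncard < Z.ncard

/-- `𝓔` is a subfamily of `𝓕` with support `E`. -/
def IsSubfamilyWithSupport (𝓕 𝓔 : Set (Set α)) (E : Set α) : Prop :=
  E ∈ 𝓕 ∧ 𝓔 = {X ∈ 𝓕 | X ⊆ E} ∧ ∀ X ∈ 𝓕, X ∉ 𝓔 → E ⊆ X ∨ X ∩ E = ∅

/-- The family `𝓕` over ground set `F` has no proper subfamilies. -/
def IrreducibleFamily (F : Set α) (𝓕 : Set (Set α)) : Prop :=
  ¬∃ (𝓔 : Set (Set α)) (E : Set α),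
      IsSubfamilyWithSupport 𝓕 𝓔 E ∧ IsProperSubsetOf E F

/-! Supports of subfamilies are nested or disjoint. If the supports of `𝓑` and `𝓓` were nested,
say `B ⊆ D`, then `𝓑` would be a subfamily of `𝓓`; irreducibility of `𝓓` forces `B = D`,
and a subfamily is determined by its support, so `𝓑 = 𝓓`. -/

namespace IsSubfamilyWithSupport

variable {𝓕 𝓔 𝓔' : Set (Set α)} {E E' : Set α}

theorem mem_iff (h : IsSubfamilyWithSupport 𝓕 𝓔 E) {X : Set α} : X ∈ 𝓔 ↔ X ∈ 𝓕 ∧ X ⊆ E := by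
  rw [h.2.1, Set.mem_ofPred_eq]

theorem subset_or_subset_or_inter_eq_empty (h : IsSubfamilyWithSupport 𝓕 𝓔 E)
    (h' : IsSubfamilyWithSupport 𝓕 𝓔' E') : E' ⊆ E ∨ E ⊆ E' ∨ E' ∩ E = ∅ := by
  by_cases hE' : E' ⊆ E
  · exact Or.inl hE'
  · exact Or.inr (h.2.2 E' h'.1 fun hmem => hE' (h.mem_iff.1 hmem).2)

theorem of_subset (h : IsSubfamilyWithSupport 𝓕 𝓔 E) (h' : IsSubfamilyWithSupport 𝓕 𝓔' E')
    (hE' : E' ⊆ E) : IsSubfamilyWithSupport 𝓔 𝓔' E' := by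
  refine ⟨h.mem_iff.2 ⟨h'.1, hE'⟩, ?_, fun X hX hX' => h'.2.2 X (h.mem_iff.1 hX).1 hX'⟩
  ext X
  rw [h'.mem_iff, Set.mem_ofPred_eq, h.mem_iff]
  exact ⟨fun ⟨hX, hXE'⟩ => ⟨⟨hX, hXE'.trans hE'⟩, hXE'⟩, fun ⟨⟨hX, _⟩, hXE'⟩ => ⟨hX, hXE'⟩⟩

theorem eq_of_subset_of_irreducible (h : IsSubfamilyWithSupport 𝓕 𝓔 E)
    (h' : IsSubfamilyWithSupport 𝓕 𝓔' E') (hirr : IrreducibleFamily E 𝓔) (hfin : E.Finite)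
    (hcard : 1 < E'.ncard) (hE' : E' ⊆ E) : 𝓔' = 𝓔 := by
  have hEE' : E' = E := by
    by_contra hne
    exact hirr ⟨𝓔', E', h.of_subset h' hE', hE', hcard,
      Set.ncard_lt_ncard (hE'.ssubset_of_ne hne) hfin⟩
  rw [h'.2.1, h.2.1, hEE']

end IsSubfamilyWithSupport

-- `Set.ncard` of an infinite set is `0`.
theorem IsProperSubsetOf.finite {Y Z : Set α} (h : IsProperSubsetOf Y Z) : Y.Finite :=
  Set.finite_of_ncard_pos (by have := h.2.1; omega)

theorem irreducible_subfamilies_disjoint_supports_general (C : Set α)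
    (𝓒 : Set (Set α))
    (𝓑 𝓓 : Set (Set α)) (B D : Set α)
    (hB : IsSubfamilyWithSupport 𝓒 𝓑 B) (hBprop : IsProperSubsetOf B C)
    (hBirr : IrreducibleFamily B 𝓑)
    (hD : IsSubfamilyWithSupport 𝓒 𝓓 D) (hDprop : IsProperSubsetOf D C)
    (hDirr : IrreducibleFamily D 𝓓)
    (hne : 𝓑 ≠ 𝓓) :
    B ∩ D = ∅ := by
  rcases hD.subset_or_subset_or_inter_eq_empty hB with hBD | hDB | hdisj
  · exact absurd (hD.eq_of_subset_of_irreducible hB hDirr hDprop.finite hBprop.2.1 hBD) hne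
  · exact absurd (hB.eq_of_subset_of_irreducible hD hBirr hBprop.finite hDprop.2.1 hDB).symm hne
  · exact hdisj

theorem irreducible_subfamilies_disjoint_supports (C : Set α) (hC : C.Finite)
    (𝓒 : Set (Set α)) (h : IsCloneStructure C 𝓒)
    (𝓑 𝓓 : Set (Set α)) (B D : Set α)
    (hB : IsSubfamilyWithSupport 𝓒 𝓑 B) (hBprop : IsProperSubsetOf B C)
    (hBirr : IrreducibleFamily B 𝓑)
    (hD : IsSubfamilyWithSupport 𝓒 𝓓 D) (hDprop : IsProperSubsetOf D C)
    (hDirr : IrreducibleFamily D 𝓓)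
    (hne : 𝓑 ≠ 𝓓) :
    B ∩ D = ∅ :=
  irreducible_subfamilies_disjoint_supports_general C 𝓒 𝓑 𝓓 B D hB hBprop hBirr hD hDprop hDirr hne
end
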